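/- Let n ≥ 3, let c : Fin n → ℝ² and r : Fin n → ℝ with r i ≥ 0 for all i, set U i = closedBall (c i) (r i), and fix p1 ∈ U 0 and pn ∈ U (n−1). Then the value max over interior indices i (0 < i < n−1) of (infDist (c i) (segment ℝ p1 pn) + r i) is the greatest element of the set { hausdorffDist (C(π)) (segment ℝ p1 pn) | π : Fin n → ℝ², (∀ i, π i ∈ U i), π 0 = p1, π (n−1) = pn }. -/

import Mathlib

/-!
Write `S` for the segment `[p1, pn]`. Upper bound: `infDist · S` is convex because `S` is, so on
the polygonal curve it is largest at a vertex, where it is at most `infDist (c i) S + r i` (and `0`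
at the two endpoints). Conversely the curve is connected and joins `p1` to `pn`, so for `q ∈ S`
the intermediate value theorem for `⟪pn - p1, ·⟫` gives a point `x` of the curve whose orthogonal
projection onto the line `p1 pn` is `q`, and then `dist q x ≤ infDist x S`.

Lower bound: push the maximising centre `c i₀` a distance `r i₀` along a unit normal of `S`
pointing away from its nearest point of `S`; this increases its distance to `S` by exactly
`r i₀`. When `c i₀ ∈ S` the normal is any unit vector perpendicular to `pn - p1`, which is where
the dimension `2` is needed.
-/

open Metric Module
open scoped RealInnerProductSpace

/-- The polygonal curve on vertices `p 0, …, p (n-1)`: the union of the segments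
between consecutive vertices. -/
noncomputable def polyCurve {n : ℕ} (p : Fin n → EuclideanSpace ℝ (Fin 2)) :
    Set (EuclideanSpace ℝ (Fin 2)) :=
  ⋃ i : Fin (n - 1),
    segment ℝ (p ⟨i.1, by have := i.isLt; omega⟩) (p ⟨i.1 + 1, by have := i.isLt; omega⟩)

theorem isCompact_segment {E : Type*} [AddCommGroup E] [Module ℝ E] [TopologicalSpace E]
    [IsTopologicalAddGroup E] [ContinuousSMul ℝ E] (a b : E) : IsCompact (segment ℝ a b) := by
  rw [segment_eq_image]
  exact isCompact_Icc.image (by fun_prop)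

theorem Convex.convexOn_infDist {F : Type*} [NormedAddCommGroup F] [NormedSpace ℝ F]
    {S : Set F} (hS : Convex ℝ S) : ConvexOn ℝ Set.univ (infDist · S) := by
  refine ⟨convex_univ, fun x _ y _ a b ha hb hab => ?_⟩
  rcases S.eq_empty_or_nonempty with rfl | hne
  · simp
  refine le_of_forall_pos_le_add fun ε hε => ?_
  obtain ⟨sx, hsx, hdx⟩ := (infDist_lt_iff hne).1 (lt_add_of_pos_right (infDist x S) hε)
  obtain ⟨sy, hsy, hdy⟩ := (infDist_lt_iff hne).1 (lt_add_of_pos_right (infDist y S) hε)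
  calc infDist (a • x + b • y) S ≤ dist (a • x + b • y) (a • sx + b • sy) :=
        infDist_le_dist_of_mem (hS hsx hsy ha hb hab)
    _ ≤ a * dist x sx + b * dist y sy := by
        grw [dist_add_add_le, dist_smul₀, dist_smul₀, Real.norm_of_nonneg ha,
          Real.norm_of_nonneg hb]
    _ ≤ a * (infDist x S + ε) + b * (infDist y S + ε) := by gcongr
    _ = a • infDist x S + b • infDist y S + ε := by
        simp only [smul_eq_mul]; linear_combination ε * hab

theorem exists_sub_eq_smul_of_mem_segment {V : Type*} [AddCommGroup V] [Module ℝ V]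
    {a b s q : V} (hs : s ∈ segment ℝ a b) (hq : q ∈ segment ℝ a b) :
    ∃ t : ℝ, s - q = t • (b - a) := by
  rw [segment_eq_image'] at hs hq
  obtain ⟨θ, -, rfl⟩ := hs
  obtain ⟨θ', -, rfl⟩ := hq
  exact ⟨θ - θ', by rw [sub_smul, add_sub_add_left_eq_sub]⟩

section InnerProductSpace

variable {E : Type*} [NormedAddCommGroup E] [InnerProductSpace ℝ E]

theorem exists_norm_eq_one_inner_eq_zero [FiniteDimensional ℝ E] (hE : 2 ≤ finrank ℝ E)
    (v : E) : ∃ w : E, ‖w‖ = 1 ∧ ⟪v, w⟫ = 0 := by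
  have hv : finrank ℝ (ℝ ∙ v) ≤ 1 := by simpa using finrank_span_le_card ({v} : Set E)
  have hperp : (ℝ ∙ v)ᗮ ≠ ⊥ := by
    intro h
    have := (ℝ ∙ v).finrank_add_finrank_orthogonal
    rw [h, finrank_bot] at this
    omega
  obtain ⟨w, hw, hw0⟩ := Submodule.exists_mem_ne_zero_of_ne_bot hperp
  refine ⟨‖w‖⁻¹ • w, norm_smul_inv_norm hw0, ?_⟩
  rw [inner_smul_right, Submodule.mem_orthogonal_singleton_iff_inner_right.1 hw, mul_zero]

theorem infDist_add_smul_eq_of_inner_le {S : Set E} {q w : E} (hq : q ∈ S) (hw : ‖w‖ = 1)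
    (hS : ∀ s ∈ S, ⟪s - q, w⟫ ≤ 0) {t : ℝ} (ht : 0 ≤ t) : infDist (q + t • w) S = t := by
  refine le_antisymm ?_ ((le_infDist ⟨q, hq⟩).2 fun s hs => ?_)
  · calc infDist (q + t • w) S ≤ dist (q + t • w) q := infDist_le_dist_of_mem hq
      _ = t := by rw [dist_self_add_left, norm_smul, hw, mul_one, Real.norm_of_nonneg ht]
  · calc t = ⟪q + t • w - s, w⟫ + ⟪s - q, w⟫ := by
          rw [← inner_add_left, sub_add_sub_cancel, add_sub_cancel_left, real_inner_smul_left,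
            real_inner_self_eq_norm_sq, hw, one_pow, mul_one]
      _ ≤ ‖q + t • w - s‖ * ‖w‖ + 0 := add_le_add (real_inner_le_norm _ _) (hS s hs)
      _ = dist (q + t • w) s := by rw [hw, mul_one, add_zero, dist_eq_norm]

theorem exists_unit_normal_segment [FiniteDimensional ℝ E] (hE : 2 ≤ finrank ℝ E) (a b x : E) :
    ∃ q ∈ segment ℝ a b, ∃ w : E, ‖w‖ = 1 ∧ (∀ s ∈ segment ℝ a b, ⟪s - q, w⟫ ≤ 0) ∧
      x = q + infDist x (segment ℝ a b) • w := by
  by_cases hx : x ∈ segment ℝ a b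
  · obtain ⟨w, hw, hvw⟩ := exists_norm_eq_one_inner_eq_zero hE (b - a)
    refine ⟨x, hx, w, hw, fun s hs => ?_, by rw [infDist_zero_of_mem hx, zero_smul, add_zero]⟩
    obtain ⟨t, ht⟩ := exists_sub_eq_smul_of_mem_segment hs hx
    rw [ht, real_inner_smul_left, hvw, mul_zero]
  · obtain ⟨q, hq, hxq⟩ :=
      (isCompact_segment a b).exists_infDist_eq_dist ⟨a, left_mem_segment ℝ a b⟩ x
    have hxq0 : x - q ≠ 0 := sub_ne_zero.2 (ne_of_mem_of_not_mem hq hx).symm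
    refine ⟨q, hq, ‖x - q‖⁻¹ • (x - q), norm_smul_inv_norm hxq0, fun s hs => ?_, ?_⟩
    · have hmin : ‖x - q‖ = ⨅ s : segment ℝ a b, ‖x - s‖ := by
        simp only [← dist_eq_norm, ← hxq, infDist_eq_iInf]
      rw [real_inner_smul_right, real_inner_comm]
      exact mul_nonpos_of_nonneg_of_nonpos (by positivity)
        ((norm_eq_iInf_iff_real_inner_le_zero (convex_segment a b) hq).1 hmin s hs)
    · rw [hxq, dist_eq_norm, smul_smul, mul_inv_cancel₀ (norm_ne_zero_iff.2 hxq0), one_smul,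
        add_sub_cancel]

theorem exists_mem_closedBall_infDist_segment_eq_add [FiniteDimensional ℝ E]
    (hE : 2 ≤ finrank ℝ E) (a b x : E) {ρ : ℝ} (hρ : 0 ≤ ρ) :
    ∃ y ∈ closedBall x ρ, infDist y (segment ℝ a b) = infDist x (segment ℝ a b) + ρ := by
  obtain ⟨q, hq, w, hw, hS, hx⟩ := exists_unit_normal_segment hE a b x
  refine ⟨q + (infDist x (segment ℝ a b) + ρ) • w, ?_,
    infDist_add_smul_eq_of_inner_le hq hw hS (add_nonneg infDist_nonneg hρ)⟩
  rw [mem_closedBall, dist_eq_norm]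
  nth_rw 2 [hx]
  rw [add_sub_add_left_eq_sub, ← sub_smul, add_sub_cancel_left, norm_smul, hw, mul_one,
    Real.norm_of_nonneg hρ]

theorem IsPreconnected.exists_dist_le_infDist_segment {C : Set E} (hC : IsPreconnected C)
    {a b q : E} (ha : a ∈ C) (hb : b ∈ C) (hq : q ∈ segment ℝ a b) :
    ∃ x ∈ C, dist q x ≤ infDist x (segment ℝ a b) := by
  set f : E → ℝ := fun z => ⟪b - a, z⟫
  have hfq : f q ∈ Set.Icc (f a) (f b) := by
    obtain ⟨θ, ⟨h0, h1⟩, rfl⟩ := (segment_eq_image' ℝ a b ▸ hq :)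
    have hfb : f b = f a + ‖b - a‖ ^ 2 := by
      simp only [f, ← real_inner_self_eq_norm_sq, ← inner_add_right, add_sub_cancel]
    simp only [Set.mem_Icc, hfb, f, inner_add_right, real_inner_smul_right,
      real_inner_self_eq_norm_sq]
    constructor <;> nlinarith [sq_nonneg ‖b - a‖]
  obtain ⟨x, hx, hfx⟩ := hC.intermediate_value ha hb (by fun_prop : Continuous f).continuousOn hfq
  refine ⟨x, hx, (le_infDist ⟨a, left_mem_segment ℝ a b⟩).2 fun s hs => ?_⟩
  obtain ⟨t, ht⟩ := exists_sub_eq_smul_of_mem_segment hs hq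
  have horth : ⟪x - q, s - q⟫ = 0 := by
    rw [ht, real_inner_smul_right, real_inner_comm, inner_sub_right]
    simp only [f] at hfx
    rw [hfx, sub_self, mul_zero]
  have hpyth : ‖x - s‖ ^ 2 = ‖x - q‖ ^ 2 + ‖s - q‖ ^ 2 := by
    rw [← sub_sub_sub_cancel_right x s q, norm_sub_sq_real, horth]
    ring
  rw [dist_comm, dist_eq_norm, dist_eq_norm]
  nlinarith [norm_nonneg (x - q), norm_nonneg (x - s), sq_nonneg ‖s - q‖]

theorem IsPreconnected.hausdorffDist_segment_le {C : Set E} (hC : IsPreconnected C)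
    {a b : E} (ha : a ∈ C) (hb : b ∈ C) {M : ℝ} (hM : 0 ≤ M)
    (h : ∀ x ∈ C, infDist x (segment ℝ a b) ≤ M) : hausdorffDist C (segment ℝ a b) ≤ M :=
  hausdorffDist_le_of_infDist hM h fun q hq => by
    obtain ⟨x, hx, hqx⟩ := hC.exists_dist_le_infDist_segment ha hb hq
    exact (infDist_le_dist_of_mem hx).trans (hqx.trans (h x hx))

end InnerProductSpace

theorem infDist_le_infDist_add_of_mem_closedBall {α : Type*} [PseudoMetricSpace α] {x y : α}
    {ρ : ℝ} (hy : y ∈ closedBall x ρ) (s : Set α) : infDist y s ≤ infDist x s + ρ :=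
  infDist_le_infDist_add_dist.trans (by grw [mem_closedBall.1 hy])

theorem Set.exists_mem_univ_pi_apply_eq_of_ne {ι α : Type*} {U : ι → Set α}
    (hU : ∀ l, (U l).Nonempty) {i j k : ι} (hij : i ≠ j) (hik : i ≠ k) (hjk : j ≠ k)
    {x y z : α} (hx : x ∈ U i) (hy : y ∈ U j) (hz : z ∈ U k) :
    ∃ π ∈ Set.univ.pi U, π i = x ∧ π j = y ∧ π k = z := by
  classical
  refine ⟨Function.update (Function.update (Function.update (fun l => (hU l).some) k z) j y) i x,
    ?_, by simp, by simp [hij.symm], by simp [hik.symm, hjk.symm]⟩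
  refine (Set.update_mem_pi_iff_of_mem ?_).2 fun _ => hx
  refine (Set.update_mem_pi_iff_of_mem ?_).2 fun _ => hy
  refine (Set.update_mem_pi_iff_of_mem ?_).2 fun _ => hz
  exact fun l _ => (hU l).some_mem

section PolyCurve

variable {n : ℕ} (p : Fin n → EuclideanSpace ℝ (Fin 2))

theorem apply_mem_polyCurve (hn : 2 ≤ n) (j : Fin n) : p j ∈ polyCurve p := by
  simp only [polyCurve, Set.mem_iUnion]
  by_cases hj : j.1 < n - 1
  · exact ⟨⟨j.1, hj⟩, left_mem_segment ℝ _ _⟩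
  · refine ⟨⟨n - 2, by omega⟩, ?_⟩
    convert right_mem_segment ℝ _ _ using 2
    exact Fin.ext (by simp only; omega)

theorem isPreconnected_polyCurve : IsPreconnected (polyCurve p) := by
  refine .iUnion_of_chain (fun _ => (convex_segment _ _).isPreconnected) fun i => ?_
  by_cases hi : IsMax i
  · rw [hi.succ_eq, Set.inter_self]
    exact ⟨_, left_mem_segment ℝ _ _⟩
  · have hsucc : i.1 + 1 = (Order.succ i).1 :=
      Nat.covBy_iff_add_one_eq.1 (Fin.covBy_iff.1 (Order.covBy_succ_of_not_isMax hi))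
    refine ⟨_, right_mem_segment ℝ _ _, ?_⟩
    convert left_mem_segment ℝ _ _ using 2
    exact Fin.ext hsucc

theorem isCompact_polyCurve : IsCompact (polyCurve p) :=
  isCompact_iUnion fun _ => isCompact_segment _ _

theorem ConvexOn.le_of_mem_polyCurve {f : EuclideanSpace ℝ (Fin 2) → ℝ}
    (hf : ConvexOn ℝ Set.univ f) {M : ℝ} (hM : ∀ j, f (p j) ≤ M) {x : EuclideanSpace ℝ (Fin 2)}
    (hx : x ∈ polyCurve p) : f x ≤ M := by
  obtain ⟨i, hi⟩ := Set.mem_iUnion.1 hx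
  exact (hf.le_max_of_mem_segment trivial trivial hi).trans (max_le (hM _) (hM _))

theorem hausdorffDist_polyCurve_segment_le (hn : 2 ≤ n) {a b : EuclideanSpace ℝ (Fin 2)}
    (ha : p ⟨0, by omega⟩ = a) (hb : p ⟨n - 1, by omega⟩ = b) {M : ℝ} (hM : 0 ≤ M)
    (hv : ∀ j : Fin n, 0 < j.1 → j.1 < n - 1 → infDist (p j) (segment ℝ a b) ≤ M) :
    hausdorffDist (polyCurve p) (segment ℝ a b) ≤ M := by
  refine (isPreconnected_polyCurve p).hausdorffDist_segment_le (ha ▸ apply_mem_polyCurve p hn _)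
    (hb ▸ apply_mem_polyCurve p hn _) hM
    fun _ => (convex_segment a b).convexOn_infDist.le_of_mem_polyCurve p fun j => ?_
  by_cases hj : 0 < j.1 ∧ j.1 < n - 1
  · exact hv j hj.1 hj.2
  obtain hj | hj : j.1 = 0 ∨ j.1 = n - 1 := by omega
  · rw [show j = ⟨0, by omega⟩ from Fin.ext hj, ha, infDist_zero_of_mem (left_mem_segment ..)]
    exact hM
  · rw [show j = ⟨n - 1, by omega⟩ from Fin.ext hj, hb, infDist_zero_of_mem (right_mem_segment ..)]
    exact hM

theorem infDist_le_hausdorffDist_polyCurve (hn : 2 ≤ n) (j : Fin n)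
    (a b : EuclideanSpace ℝ (Fin 2)) :
    infDist (p j) (segment ℝ a b) ≤ hausdorffDist (polyCurve p) (segment ℝ a b) :=
  infDist_le_hausdorffDist_of_mem (apply_mem_polyCurve p hn j)
    (hausdorffEDist_ne_top_of_nonempty_of_bounded ⟨_, apply_mem_polyCurve p hn j⟩
      ⟨a, left_mem_segment ℝ a b⟩ (isCompact_polyCurve p).isBounded
      (isCompact_segment a b).isBounded)

end PolyCurve

/-- Disks, fixed endpoints: the greatest Hausdorff distance between a realisation and
the one-segment simplification is the maximum, over interior indices `i`, of the
distance from the centre `c i` to the segment plus the radius `r i`. -/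
theorem hausdorff_disks_fixed_endpoints
    (n : ℕ) (hn : 3 ≤ n) (c : Fin n → EuclideanSpace ℝ (Fin 2)) (r : Fin n → ℝ)
    (hr : ∀ i, 0 ≤ r i)
    (p1 pn : EuclideanSpace ℝ (Fin 2))
    (hp1 : p1 ∈ Metric.closedBall (c ⟨0, by omega⟩) (r ⟨0, by omega⟩))
    (hpn : pn ∈ Metric.closedBall (c ⟨n - 1, by omega⟩) (r ⟨n - 1, by omega⟩)) :
    ∃ M : ℝ,
      IsGreatest {x : ℝ | ∃ i : Fin n, 0 < i.1 ∧ i.1 < n - 1 ∧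
        x = Metric.infDist (c i) (segment ℝ p1 pn) + r i} M ∧
      IsGreatest {d : ℝ | ∃ π : Fin n → EuclideanSpace ℝ (Fin 2),
        (∀ i, π i ∈ Metric.closedBall (c i) (r i)) ∧
        π ⟨0, by omega⟩ = p1 ∧ π ⟨n - 1, by omega⟩ = pn ∧
        d = Metric.hausdorffDist (polyCurve π) (segment ℝ p1 pn)} M := by
  obtain ⟨i₀, ⟨hi₀0, hi₀n⟩, hmax⟩ := Set.exists_max_image {i : Fin n | 0 < i.1 ∧ i.1 < n - 1}
    (fun i => infDist (c i) (segment ℝ p1 pn) + r i) (Set.toFinite _)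
    ⟨⟨1, by omega⟩, Nat.one_pos, show 1 < n - 1 by omega⟩
  have hM : 0 ≤ infDist (c i₀) (segment ℝ p1 pn) + r i₀ := add_nonneg infDist_nonneg (hr i₀)
  have hle : ∀ π : Fin n → EuclideanSpace ℝ (Fin 2), (∀ i, π i ∈ closedBall (c i) (r i)) →
      π ⟨0, by omega⟩ = p1 → π ⟨n - 1, by omega⟩ = pn →
      hausdorffDist (polyCurve π) (segment ℝ p1 pn) ≤
        infDist (c i₀) (segment ℝ p1 pn) + r i₀ := fun π hπ h0 hl =>
    hausdorffDist_polyCurve_segment_le π (by omega) h0 hl hM fun j h1 h2 =>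
      (infDist_le_infDist_add_of_mem_closedBall (hπ j) _).trans (hmax j ⟨h1, h2⟩)
  obtain ⟨y, hy, hyS⟩ := exists_mem_closedBall_infDist_segment_eq_add
    finrank_euclideanSpace_fin.ge p1 pn (c i₀) (hr i₀)
  obtain ⟨π, hπ, h0, hl, hyπ⟩ := Set.exists_mem_univ_pi_apply_eq_of_ne
    (fun i => nonempty_closedBall.2 (hr i)) (i := ⟨0, by omega⟩) (j := ⟨n - 1, by omega⟩)
    (k := i₀) (Fin.ne_of_val_ne (by omega : 0 ≠ n - 1)) (Fin.ne_of_val_ne (by omega : 0 ≠ i₀.1))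
    (Fin.ne_of_val_ne (by omega : n - 1 ≠ i₀.1)) hp1 hpn hy
  rw [Set.mem_univ_pi] at hπ
  refine ⟨_, ⟨⟨i₀, hi₀0, hi₀n, rfl⟩, ?_⟩, ⟨π, hπ, h0, hl, le_antisymm ?_ (hle π hπ h0 hl)⟩, ?_⟩
  · rintro _ ⟨i, h1, h2, rfl⟩
    exact hmax i ⟨h1, h2⟩
  · exact hyS ▸ hyπ ▸ infDist_le_hausdorffDist_polyCurve π (by omega) i₀ p1 pn
  · rintro _ ⟨π', hπ', h0', hl', rfl⟩
    exact hle π' hπ' h0' hl'
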